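/- Let (N,S) be a Nijenhuis pair on a pre-Lie-morphism triple (g,h,φ) over a field K of characteristic 0. Define ω(x,y) = x·_g N(y) + N(x)·_g y − N(x·_g y), ϖ(u,v) = u·_h S(v) + S(u)·_h v − S(u·_h v), θ = φ∘N − S∘φ, and for t ∈ K set x ·_t y = x·_g y + tω(x,y), u ∗_t v = u·_h v + tϖ(u,v), φ_t = φ + tθ. Then (ω,ϖ,θ) generates a 1-parameter infinitesimal deformation of (g,h,φ): for every t ∈ K the products ·_t and ∗_t satisfy the pre-Lie identity and φ_t(x ·_t y) + t³ϖ(θ(x),θ(y)) = φ_t(x) ∗_t φ_t(y) for all x,y ∈ g. Moreover this deformation is trivial: for every t ∈ K, (Id_g + tN)(x ·_t y) = (Id_g + tN)(x) ·_g (Id_g + tN)(y), (Id_h + tS)(u ∗_t v) = (Id_h + tS)(u) ·_h (Id_h + tS)(v), and φ((Id_g + tN)(x)) = (Id_h + tS)(φ_t(x)). -/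
import Mathlib


/-- A binary product satisfies the pre-Lie identity. -/
def PreLieOn {g : Type*} [AddCommGroup g] (p : g → g → g) : Prop :=
  ∀ x y z : g, p (p x y) z - p x (p y z) = p (p y x) z - p y (p x z)

/-- The `t`-deformed product `x ·_t y = x·y + t • ω(x,y)`. -/
def tProd {K g : Type*} [Field K] [AddCommGroup g] [Module K g]
    (mul ω : g → g → g) (t : K) (x y : g) : g :=
  mul x y + t • ω x y

/-- The deformed product `x ·_N y := N(x)·y + x·N(y) − N(x·y)` associated to a linear
operator `N`; for a Nijenhuis pair this is exactly `ω = d_g N` (resp. `ϖ = d_h S`). -/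
def nijProd {K g : Type*} [Field K] [AddCommGroup g] [Module K g]
    (mul : g →ₗ[K] g →ₗ[K] g) (N : g →ₗ[K] g) (x y : g) : g :=
  mul (N x) y + mul x (N y) - N (mul x y)

private lemma nij_triv {K V : Type*} [Field K] [AddCommGroup V] [Module K V]
    (mul : V →ₗ[K] V →ₗ[K] V) (N : V →ₗ[K] V)
    (hN : ∀ x y : V, mul (N x) (N y) = N (nijProd mul N x y)) (t : K) (x y : V) :
    tProd (fun a b => mul a b) (nijProd mul N) t x y
      + t • N (tProd (fun a b => mul a b) (nijProd mul N) t x y)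
      = mul (x + t • N x) (y + t • N y) := by
  linear_combination (norm := (simp only [tProd, nijProd, map_add, map_sub, map_smul,
    LinearMap.add_apply, LinearMap.sub_apply, LinearMap.smul_apply]; module))
    (-((t*t) • hN x y))

private lemma nij_prelie {K V : Type*} [Field K] [AddCommGroup V] [Module K V]
    (mul : V →ₗ[K] V →ₗ[K] V) (hmul : PreLieOn fun a b => mul a b) (N : V →ₗ[K] V)
    (hN : ∀ x y : V, mul (N x) (N y) = N (nijProd mul N x y)) (t : K) :
    PreLieOn (tProd (fun a b => mul a b) (nijProd mul N) t) := by
  intro x y z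
  linear_combination (norm := (simp only [tProd, nijProd, map_add, map_sub, map_smul,
    LinearMap.add_apply, LinearMap.sub_apply, LinearMap.smul_apply]; module))
    hmul x y z
    + t • (hmul (N x) y z + hmul x (N y) z + hmul x y (N z) - congrArg N (hmul x y z))
    + (t*t) • (congrArg N (congrArg N (hmul x y z)) - congrArg N (hmul x y (N z))
        - congrArg N (hmul x (N y) z) + hmul x (N y) (N z) + congrArg N (hmul y (N x) z)
        - hmul y (N x) (N z) + hmul (N x) (N y) z
        - congrArg (fun w => mul w z) (hN x y) - congrArg (fun w => mul y w) (hN x z)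
        + hN x (mul y z) + congrArg (fun w => mul w z) (hN y x)
        + congrArg (fun w => mul x w) (hN y z) - hN y (mul x z)
        - hN (mul x y) z + hN (mul y x) z)

/-- A Nijenhuis pair `(N, S)` on a pre-Lie-morphism triple `(g, h, φ)`
generates, via `ω = d_g N`, `ϖ = d_h S`, `θ = φ∘N − S∘φ`, a 1-parameter infinitesimal
deformation of `(g, h, φ)`, and this deformation is trivial, the equivalence to the
undeformed triple being given by `Id_g + tN` and `Id_h + tS`. -/
theorem nijenhuis_pair_gives_trivial_deformation {K : Type*} [Field K] [CharZero K]
    {g h : Type*} [AddCommGroup g] [Module K g] [AddCommGroup h] [Module K h]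
    (mulg : g →ₗ[K] g →ₗ[K] g) (mulh : h →ₗ[K] h →ₗ[K] h)
    (hg : PreLieOn fun x y => mulg x y) (hh : PreLieOn fun u v => mulh u v)
    (φ : g →ₗ[K] h) (hφ : ∀ x y : g, φ (mulg x y) = mulh (φ x) (φ y))
    (N : g →ₗ[K] g) (hN : ∀ x y : g, mulg (N x) (N y) = N (nijProd mulg N x y))
    (S : h →ₗ[K] h) (hS : ∀ u v : h, mulh (S u) (S v) = S (nijProd mulh S u v))
    (hNS : ∀ x : g, S (φ (N x)) = S (S (φ x))) :
    ∀ t : K,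
      (PreLieOn (tProd (fun a b => mulg a b) (nijProd mulg N) t) ∧
       PreLieOn (tProd (fun a b => mulh a b) (nijProd mulh S) t) ∧
       (∀ x y : g,
         (φ (tProd (fun a b => mulg a b) (nijProd mulg N) t x y)
           + t • (φ (N (tProd (fun a b => mulg a b) (nijProd mulg N) t x y))
               - S (φ (tProd (fun a b => mulg a b) (nijProd mulg N) t x y))))
           + t ^ 3 • nijProd mulh S (φ (N x) - S (φ x)) (φ (N y) - S (φ y))
         = tProd (fun a b => mulh a b) (nijProd mulh S) t
             (φ x + t • (φ (N x) - S (φ x))) (φ y + t • (φ (N y) - S (φ y))))) ∧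
      ((∀ x y : g,
         tProd (fun a b => mulg a b) (nijProd mulg N) t x y
           + t • N (tProd (fun a b => mulg a b) (nijProd mulg N) t x y)
         = mulg (x + t • N x) (y + t • N y)) ∧
       (∀ u v : h,
         tProd (fun a b => mulh a b) (nijProd mulh S) t u v
           + t • S (tProd (fun a b => mulh a b) (nijProd mulh S) t u v)
         = mulh (u + t • S u) (v + t • S v)) ∧
       (∀ x : g,
         φ (x + t • N x)
           = (φ x + t • (φ (N x) - S (φ x)))
             + t • S (φ x + t • (φ (N x) - S (φ x))))) := by
  intro t
  refine ⟨⟨nij_prelie mulg hg N hN t, nij_prelie mulh hh S hS t, ?_⟩,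
    fun x y => nij_triv mulg N hN t x y, fun u v => nij_triv mulh S hS t u v, ?_⟩
  · intro x y
    linear_combination (norm := (simp only [tProd, nijProd, map_add, map_sub, map_smul,
      LinearMap.add_apply, LinearMap.sub_apply, LinearMap.smul_apply]; module))
      hφ x y - t • congrArg S (hφ x y) + (t*t) • congrArg S (congrArg S (hφ x y))
      + t • hφ x (N y) - (t*t) • congrArg S (hφ x (N y))
      + t • hφ (N x) y - (t*t) • congrArg S (hφ (N x) y)
      + (t*t) • hφ (N x) (N y)
      - (t*t) • congrArg φ (hN x y)
      + (t*t) • hS (φ x) (φ y)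
      + (t*t) • hNS (mulg x y)
      - (t*t) • congrArg (fun w => mulh w (φ y)) (hNS x)
      - (t*t) • congrArg (fun w => mulh (φ x) w) (hNS y)
  · intro x
    linear_combination (norm := (simp only [map_add, map_sub, map_smul,
      LinearMap.add_apply, LinearMap.sub_apply, LinearMap.smul_apply]; module))
      (-((t*t) • hNS x))
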